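/- If ρ_ε ≥ 0 are uniformly bounded in L^{γ+1}((0,T)×Ω), converge weakly to ρ, and the weak limit of ρ_ε log ρ_ε equals ρ log ρ almost everywhere, then ρ_ε → ρ strongly in L¹((0,T)×Ω). -/

import Mathlib

/-!
Strict convexity of `z log z` enters through its Bregman divergence
`D(a, b) = a log a - b log b - (1 + log b)(a - b) ≥ (√a - √b)²`.
On `{δ ≤ ρ ≤ M}` the factor `1 + log ρ` is a bounded test function, so the two weak limits
give `∫ D(ρₙ, ρ) → 0` there, hence `ρₙ → ρ` in measure on that set; the sets `{ρ < δ}` and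
`{ρ > M}` are small, by weak convergence and by integrability of `ρ`. The `L^{γ+1}` bound makes
`(ρₙ)` uniformly integrable, and Vitali's theorem turns convergence in measure into `L¹`
convergence.
-/

open MeasureTheory Filter Topology Set Real

noncomputable def mulLogBregman (a b : ℝ) : ℝ := a * log a - b * log b - (1 + log b) * (a - b)

lemma sq_sqrt_sub_sqrt_le_mulLogBregman {a b : ℝ} (ha : 0 ≤ a) (hb : 0 < b) :
    (√a - √b) ^ 2 ≤ mulLogBregman a b := by
  obtain ⟨x, hx, rfl⟩ : ∃ x, 0 ≤ x ∧ x ^ 2 = a := ⟨√a, sqrt_nonneg a, sq_sqrt ha⟩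
  obtain ⟨y, hy, rfl⟩ : ∃ y, 0 < y ∧ y ^ 2 = b := ⟨√b, sqrt_pos.2 hb, sq_sqrt hb.le⟩
  rw [sqrt_sq hx, sqrt_sq hy.le, mulLogBregman, log_pow, log_pow]
  rcases hx.eq_or_lt with rfl | hx
  · simp only [ne_eq, OfNat.ofNat_ne_zero, not_false_eq_true, zero_pow, zero_sub]
    nlinarith
  · have hlog := one_sub_inv_le_log_of_pos (div_pos hx hy)
    rw [inv_div, log_div hx.ne' hy.ne'] at hlog
    have hxy : x ^ 2 * (1 - y / x) = x * (x - y) := by field_simp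
    push_cast
    nlinarith [mul_le_mul_of_nonneg_left hlog (by positivity : 0 ≤ x ^ 2)]

lemma mulLogBregman_nonneg {a b : ℝ} (ha : 0 ≤ a) (hb : 0 < b) : 0 ≤ mulLogBregman a b :=
  (sq_nonneg _).trans (sq_sqrt_sub_sqrt_le_mulLogBregman ha hb)

lemma div_le_abs_sqrt_sub_sqrt {a b M θ : ℝ} (hθ : 0 ≤ θ) (ha : 0 ≤ a) (hb : 0 ≤ b)
    (hbM : b ≤ M) (hab : θ ≤ |a - b|) : θ / (θ + 1 + 2 * √M) ≤ |√a - √b| := by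
  set s := |√a - √b|
  have hsum : |a - b| = s * (√a + √b) := by
    have : a - b = (√a - √b) * (√a + √b) := by
      linear_combination (-1 : ℝ) * sq_sqrt ha + sq_sqrt hb
    rw [this, abs_mul, abs_of_nonneg (by positivity : 0 ≤ √a + √b)]
  have hsqrt_a : √a ≤ s + √b := by linarith [le_abs_self (√a - √b)]
  have hsqrt_b : √b ≤ √M := sqrt_le_sqrt hbM
  have hs : 0 ≤ s := abs_nonneg _
  rw [div_le_iff₀ (by positivity)]
  rcases le_total s 1 with h1 | h1
  · nlinarith [mul_le_mul_of_nonneg_left (show √a + √b ≤ s + 2 * √M by linarith) hs]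
  · nlinarith [sqrt_nonneg M]

lemma sq_div_le_mulLogBregman {a b M θ : ℝ} (hθ : 0 ≤ θ) (ha : 0 ≤ a) (hb : 0 < b)
    (hbM : b ≤ M) (hab : θ ≤ |a - b|) : (θ / (θ + 1 + 2 * √M)) ^ 2 ≤ mulLogBregman a b := by
  refine le_trans ?_ (sq_sqrt_sub_sqrt_le_mulLogBregman ha hb)
  rw [← sq_abs (√a - √b)]
  exact pow_le_pow_left₀ (by positivity) (div_le_abs_sqrt_sub_sqrt hθ ha hb.le hbM hab) 2

lemma abs_mul_log_le {z γ : ℝ} (hz : 0 ≤ z) (hγ : 0 < γ) :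
    |z * log z| ≤ 1 + z ^ (γ + 1) / γ := by
  have hpow : 0 ≤ z ^ (γ + 1) / γ := by positivity
  have hupper : z * log z ≤ z ^ (γ + 1) / γ := by
    calc z * log z ≤ z * (z ^ γ / γ) := mul_le_mul_of_nonneg_left (log_le_rpow_div hz hγ) hz
      _ = z ^ (γ + 1) / γ := by rw [rpow_add_one' hz (by linarith)]; ring
  rw [abs_le]
  constructor <;> linarith [self_sub_one_le_mul_log hz]

lemma le_one_add_rpow {z p : ℝ} (hz : 0 ≤ z) (hp : 1 ≤ p) : z ≤ 1 + z ^ p := by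
  rcases le_total z 1 with h | h
  · linarith [rpow_nonneg hz p]
  · linarith [self_le_rpow_of_one_le h hp]

lemma abs_indicator_le {α : Type*} {s : Set α} {f : α → ℝ} {C : ℝ} (hC : 0 ≤ C)
    (hf : ∀ x ∈ s, |f x| ≤ C) (x : α) : |s.indicator f x| ≤ C := by
  by_cases hx : x ∈ s
  · simpa [hx] using hf x hx
  · simpa [hx] using hC

lemma self_le_rpow_mul_rpow_one_sub {z K p : ℝ} (hK : 0 < K) (hKz : K ≤ z) (hp : 1 ≤ p) :
    z ≤ z ^ p * K ^ (1 - p) := by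
  have hz : 0 < z := hK.trans_le hKz
  calc z = z ^ p * z ^ (1 - p) := by rw [← rpow_add hz, add_sub_cancel, rpow_one]
    _ ≤ z ^ p * K ^ (1 - p) :=
      mul_le_mul_of_nonneg_left (rpow_le_rpow_of_nonpos hK hKz (by linarith)) (by positivity)

lemma setOf_le_abs_sub_subset {α : Type*} {f g : α → ℝ} (hf : ∀ x, 0 ≤ f x) {δ θ M : ℝ}
    (hδθ : δ ≤ θ) :
    {x | θ ≤ |f x - g x|} ⊆ (g ⁻¹' Iio δ ∩ {x | θ ≤ f x}) ∪ g ⁻¹' Ioi M ∪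
      (g ⁻¹' Icc δ M ∩ {x | θ ≤ |f x - g x|}) ∪ {x | g x < 0} := by
  intro x (hx : θ ≤ |f x - g x|)
  simp only [mem_union, mem_inter_iff, mem_preimage, mem_Iio, mem_Ioi, mem_Icc, mem_ofPred_eq]
  rcases lt_or_ge (g x) 0 with hg0 | hg0
  · exact Or.inr hg0
  rcases lt_or_ge (g x) δ with hgδ | hgδ
  · rcases le_abs'.1 hx with h | h
    · linarith [hf x]
    · exact Or.inl (Or.inl (Or.inl ⟨hgδ, by linarith⟩))
  rcases le_or_gt (g x) M with hgM | hgM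
  · exact Or.inl (Or.inr ⟨⟨hgδ, hgM⟩, hx⟩)
  · exact Or.inl (Or.inl (Or.inr hgM))

section TendstoWeakly

variable {α ι : Type*} [MeasurableSpace α] {μ : Measure α} {l : Filter ι}
  {F : ι → α → ℝ} {G : α → ℝ}

def TendstoWeakly (μ : Measure α) (l : Filter ι) (F : ι → α → ℝ) (G : α → ℝ) : Prop :=
  ∀ φ : α → ℝ, Measurable φ → (∃ C, ∀ x, |φ x| ≤ C) →
    Tendsto (fun n => ∫ x, F n x * φ x ∂μ) l (𝓝 (∫ x, G x * φ x ∂μ))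

lemma TendstoWeakly.tendsto_setIntegral (h : TendstoWeakly μ l F G) {s : Set α}
    (hs : MeasurableSet s) :
    Tendsto (fun n => ∫ x in s, F n x ∂μ) l (𝓝 (∫ x in s, G x ∂μ)) := by
  have hmul : ∀ f : α → ℝ, (fun x => f x * s.indicator 1 x) = s.indicator f := fun f =>
    funext fun x => by by_cases hx : x ∈ s <;> simp [hx]
  have := h _ (measurable_one.indicator hs) ⟨1, abs_indicator_le zero_le_one (by simp)⟩
  simpa only [hmul, integral_indicator hs] using this

lemma TendstoWeakly.ae_nonneg [l.NeBot] (h : TendstoWeakly μ l F G) (hF : ∀ n x, 0 ≤ F n x)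
    (hG : Integrable G μ) : 0 ≤ᵐ[μ] G :=
  ae_nonneg_of_forall_setIntegral_nonneg hG fun _s hs _ =>
    ge_of_tendsto (h.tendsto_setIntegral hs)
      (Eventually.of_forall fun n => setIntegral_nonneg hs fun x _ => hF n x)

lemma TendstoWeakly.eventually_mul_measureReal_lt (h : TendstoWeakly μ l F G)
    (hF : ∀ n x, 0 ≤ F n x) (hF_int : ∀ n, Integrable (F n) μ) {s : Set α}
    (hs : MeasurableSet s) {θ c : ℝ} (hc : ∫ x in s, G x ∂μ < c) :
    ∀ᶠ n in l, θ * μ.real (s ∩ {x | θ ≤ F n x}) < c := by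
  filter_upwards [(h.tendsto_setIntegral hs).eventually_lt_const hc] with n hn
  have hmarkov := mul_meas_ge_le_integral_of_nonneg (μ := μ.restrict s)
    (ae_of_all _ (hF n)) (hF_int n).restrict θ
  rw [measureReal_restrict_apply' hs, inter_comm] at hmarkov
  exact hmarkov.trans_lt hn

lemma TendstoWeakly.integrable_and_tendsto_integral_indicator_mulLogBregman
    (hw : TendstoWeakly μ l F G)
    (hwlog : TendstoWeakly μ l (fun n x => F n x * log (F n x)) (fun x => G x * log (G x)))
    (hF_int : ∀ n, Integrable (F n) μ)
    (hFlog_int : ∀ n, Integrable (fun x => F n x * log (F n x)) μ)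
    (hG : Measurable G) (hG_int : Integrable G μ) {δ M : ℝ} (hδ : 0 < δ) :
    (∀ n, Integrable ((G ⁻¹' Icc δ M).indicator fun x => mulLogBregman (F n x) (G x)) μ) ∧
      Tendsto (fun n => ∫ x, (G ⁻¹' Icc δ M).indicator
        (fun x => mulLogBregman (F n x) (G x)) x ∂μ) l (𝓝 0) := by
  set A := G ⁻¹' Icc δ M
  have hA : MeasurableSet A := hG measurableSet_Icc
  set L := max |log δ| |log M|
  have hlog_bdd : ∀ x ∈ A, |log (G x)| ≤ L := fun x hx =>
    abs_le_max_abs_abs (log_le_log hδ hx.1) (log_le_log (hδ.trans_le hx.1) hx.2)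
  set φ := A.indicator (1 : α → ℝ)
  set χ := A.indicator fun x => log (G x)
  set ψ := A.indicator fun x => 1 + log (G x)
  have hφ_meas : Measurable φ := measurable_one.indicator hA
  have hψ_meas : Measurable ψ := (measurable_const.add hG.log).indicator hA
  have hφ_bdd : ∀ x, |φ x| ≤ 1 := abs_indicator_le zero_le_one (by simp)
  have hχ_bdd : ∀ x, |χ x| ≤ L := abs_indicator_le (by positivity) hlog_bdd
  have hψ_bdd : ∀ x, |ψ x| ≤ 1 + L := abs_indicator_le (by positivity) fun x hx =>
    (abs_add_le _ _).trans (by rw [abs_one]; linarith [hlog_bdd x hx])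
  have hGlog_int : Integrable (fun x => G x * log (G x) * φ x) μ := by
    have hχ : (fun x => G x * log (G x) * φ x) = fun x => G x * χ x :=
      funext fun x => by by_cases hx : x ∈ A <;> simp [φ, χ, hx]
    rw [hχ]
    exact hG_int.mul_bdd ((hG.log).indicator hA).aestronglyMeasurable (ae_of_all _ hχ_bdd)
  have hFlogφ_int n : Integrable (fun x => F n x * log (F n x) * φ x) μ :=
    (hFlog_int n).mul_bdd hφ_meas.aestronglyMeasurable (ae_of_all _ hφ_bdd)
  have hFψ_int n : Integrable (fun x => F n x * ψ x) μ :=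
    (hF_int n).mul_bdd hψ_meas.aestronglyMeasurable (ae_of_all _ hψ_bdd)
  have hGψ_int : Integrable (fun x => G x * ψ x) μ :=
    hG_int.mul_bdd hψ_meas.aestronglyMeasurable (ae_of_all _ hψ_bdd)
  -- On `A` the Bregman divergence is affine in the two weakly converging quantities.
  have hrepr n : (A.indicator fun x => mulLogBregman (F n x) (G x)) = fun x =>
      (F n x * log (F n x) * φ x - G x * log (G x) * φ x) - (F n x * ψ x - G x * ψ x) := by
    funext x
    by_cases hx : x ∈ A
    · simp only [φ, ψ, indicator_of_mem hx, mulLogBregman, Pi.one_apply]; ring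
    · simp [φ, ψ, hx]
  refine ⟨fun n => hrepr n ▸ ((hFlogφ_int n).sub hGlog_int).sub ((hFψ_int n).sub hGψ_int), ?_⟩
  have hlim := ((hwlog φ hφ_meas ⟨1, hφ_bdd⟩).sub_const (∫ x, G x * log (G x) * φ x ∂μ)).sub
    ((hw ψ hψ_meas ⟨1 + L, hψ_bdd⟩).sub_const (∫ x, G x * ψ x ∂μ))
  rw [sub_self, sub_self, sub_self] at hlim
  refine hlim.congr fun n => ?_
  rw [hrepr, integral_sub, integral_sub, integral_sub]
  exacts [hFψ_int n, hGψ_int, hFlogφ_int n, hGlog_int, (hFlogφ_int n).sub hGlog_int,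
    (hFψ_int n).sub hGψ_int]

end TendstoWeakly

section FiniteMeasure

variable {α ι : Type*} [MeasurableSpace α] {μ : Measure α} [IsFiniteMeasure μ] {l : Filter ι}
  {F : ι → α → ℝ} {G : α → ℝ}

lemma TendstoWeakly.tendsto_measureReal_preimage_Icc_inter (hw : TendstoWeakly μ l F G)
    (hwlog : TendstoWeakly μ l (fun n x => F n x * log (F n x)) (fun x => G x * log (G x)))
    (hF : ∀ n x, 0 ≤ F n x) (hF_int : ∀ n, Integrable (F n) μ)
    (hFlog_int : ∀ n, Integrable (fun x => F n x * log (F n x)) μ)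
    (hG : Measurable G) (hG_int : Integrable G μ) {δ M θ : ℝ} (hδ : 0 < δ) (hθ : 0 < θ) :
    Tendsto (fun n => μ.real (G ⁻¹' Icc δ M ∩ {x | θ ≤ |F n x - G x|})) l (𝓝 0) := by
  obtain ⟨hint, hlim⟩ := hw.integrable_and_tendsto_integral_indicator_mulLogBregman hwlog hF_int
    hFlog_int hG hG_int (M := M) hδ
  set c := (θ / (θ + 1 + 2 * √M)) ^ 2
  have hc : 0 < c := by positivity
  have hbound n : c * μ.real (G ⁻¹' Icc δ M ∩ {x | θ ≤ |F n x - G x|}) ≤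
      ∫ x, (G ⁻¹' Icc δ M).indicator (fun x => mulLogBregman (F n x) (G x)) x ∂μ := by
    have hnonneg : ∀ x, 0 ≤ (G ⁻¹' Icc δ M).indicator (fun x => mulLogBregman (F n x) (G x)) x :=
      indicator_nonneg fun x hx => mulLogBregman_nonneg (hF n x) (hδ.trans_le hx.1)
    refine le_trans ?_ (mul_meas_ge_le_integral_of_nonneg (ae_of_all _ hnonneg) (hint n) c)
    refine mul_le_mul_of_nonneg_left (measureReal_mono fun x hx => show c ≤ _ from ?_) hc.le
    rw [indicator_of_mem hx.1]
    exact sq_div_le_mulLogBregman hθ.le (hF n x) (hδ.trans_le hx.1.1) hx.1.2 hx.2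
  refine tendsto_of_tendsto_of_tendsto_of_le_of_le tendsto_const_nhds
    (by simpa using hlim.div_const c) (fun n => measureReal_nonneg) fun n => ?_
  exact (le_div_iff₀' hc).2 (hbound n)

lemma MeasureTheory.Integrable.exists_measureReal_preimage_Ioi_lt (hG : Integrable G μ) {η : ℝ}
    (hη : 0 < η) :
    ∃ M, μ.real (G ⁻¹' Ioi M) < η := by
  set I := ∫ x, |G x| ∂μ
  have hI : 0 ≤ I := integral_nonneg fun x => abs_nonneg _
  have hM : 0 < (I + 1) / η := by positivity
  refine ⟨(I + 1) / η, lt_of_mul_lt_mul_left ?_ hM.le⟩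
  calc (I + 1) / η * μ.real (G ⁻¹' Ioi ((I + 1) / η))
      ≤ (I + 1) / η * μ.real {x | (I + 1) / η ≤ |G x|} :=
        mul_le_mul_of_nonneg_left
          (measureReal_mono fun x (hx : _ < G x) => hx.le.trans (le_abs_self _)) hM.le
    _ ≤ I := mul_meas_ge_le_integral_of_nonneg (ae_of_all μ fun x => abs_nonneg (G x)) hG.abs _
    _ < (I + 1) / η * η := by rw [div_mul_cancel₀ _ hη.ne']; linarith

lemma setIntegral_preimage_Iio_le (hG : Measurable G) (hG_int : Integrable G μ) {δ : ℝ}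
    (hδ : 0 ≤ δ) : ∫ x in G ⁻¹' Iio δ, G x ∂μ ≤ δ * μ.real univ :=
  calc ∫ x in G ⁻¹' Iio δ, G x ∂μ ≤ ∫ _ in G ⁻¹' Iio δ, δ ∂μ :=
        setIntegral_mono_on hG_int.integrableOn (integrable_const δ).integrableOn
          (hG measurableSet_Iio) fun x hx => le_of_lt hx
    _ ≤ δ * μ.real univ := by
        rw [setIntegral_const, smul_eq_mul, mul_comm]
        exact mul_le_mul_of_nonneg_left (measureReal_mono (subset_univ _)) hδ

lemma TendstoWeakly.tendstoInMeasure [l.NeBot] (hw : TendstoWeakly μ l F G)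
    (hwlog : TendstoWeakly μ l (fun n x => F n x * log (F n x)) (fun x => G x * log (G x)))
    (hF : ∀ n x, 0 ≤ F n x) (hF_int : ∀ n, Integrable (F n) μ)
    (hFlog_int : ∀ n, Integrable (fun x => F n x * log (F n x)) μ)
    (hG : Measurable G) (hG_int : Integrable G μ) :
    TendstoInMeasure μ F l G := by
  rw [tendstoInMeasure_iff_measureReal_dist]
  intro θ hθ
  simp only [Real.dist_eq]
  refine tendsto_order.2
    ⟨fun a ha => Eventually.of_forall fun n => ha.trans_le measureReal_nonneg, fun η hη => ?_⟩
  obtain ⟨M, hM⟩ := hG_int.exists_measureReal_preimage_Ioi_lt (by positivity : 0 < η / 3)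
  set V := μ.real univ
  set δ := min θ (θ * η / (3 * (V + 1)))
  have hδ : 0 < δ := by positivity
  have hδθ : δ ≤ θ := min_le_left _ _
  have hlow : ∫ x in G ⁻¹' Iio δ, G x ∂μ < θ * (η / 3) :=
    calc ∫ x in G ⁻¹' Iio δ, G x ∂μ ≤ δ * V := setIntegral_preimage_Iio_le hG hG_int hδ.le
      _ ≤ θ * η / (3 * (V + 1)) * V := by gcongr; exact min_le_right _ _
      _ < θ * (η / 3) := by
          rw [div_mul_eq_mul_div, div_lt_iff₀ (by positivity)]
          nlinarith [mul_pos hθ hη]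
  have hneg : μ.real {x | G x < 0} = 0 :=
    (measureReal_eq_zero_iff).2 (by simpa [EventuallyLE, ae_iff] using hw.ae_nonneg hF hG_int)
  filter_upwards [hw.eventually_mul_measureReal_lt (θ := θ) hF hF_int (hG measurableSet_Iio) hlow,
    (hw.tendsto_measureReal_preimage_Icc_inter hwlog hF hF_int hFlog_int hG hG_int
      (M := M) hδ hθ).eventually_lt_const (by positivity : 0 < η / 3)] with n hlow_n hmid_n
  have hlow_n' : μ.real (G ⁻¹' Iio δ ∩ {x | θ ≤ F n x}) < η / 3 :=
    lt_of_mul_lt_mul_left hlow_n hθ.le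
  calc μ.real {x | θ ≤ |F n x - G x|}
      ≤ μ.real ((G ⁻¹' Iio δ ∩ {x | θ ≤ F n x}) ∪ G ⁻¹' Ioi M ∪
          (G ⁻¹' Icc δ M ∩ {x | θ ≤ |F n x - G x|}) ∪ {x | G x < 0}) :=
        measureReal_mono (setOf_le_abs_sub_subset (hF n) hδθ)
    _ ≤ μ.real (G ⁻¹' Iio δ ∩ {x | θ ≤ F n x}) + μ.real (G ⁻¹' Ioi M) +
          μ.real (G ⁻¹' Icc δ M ∩ {x | θ ≤ |F n x - G x|}) + μ.real {x | G x < 0} := by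
        grw [measureReal_union_le, measureReal_union_le, measureReal_union_le]
    _ < η := by linarith

end FiniteMeasure

lemma unifIntegrable_one_of_integral_norm_rpow_le {α ι β : Type*} [MeasurableSpace α]
    {μ : Measure α} [NormedAddCommGroup β] {f : ι → α → β}
    (hf : ∀ i, AEStronglyMeasurable (f i) μ) {p C : ℝ} (hp : 1 < p)
    (hint : ∀ i, Integrable (fun x => ‖f i x‖ ^ p) μ) (hC : ∀ i, ∫ x, ‖f i x‖ ^ p ∂μ ≤ C) :
    UnifIntegrable f 1 μ := by
  refine unifIntegrable_of le_rfl ENNReal.one_ne_top hf fun ε hε => ?_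
  have hsmall : Tendsto (fun K : ℝ => C * K ^ (1 - p)) atTop (𝓝 0) := by
    simpa only [neg_sub, mul_zero] using (tendsto_rpow_neg_atTop (sub_pos.2 hp)).const_mul C
  obtain ⟨K, hKε, hK⟩ :=
    ((hsmall.eventually (ge_mem_nhds hε)).and (eventually_ge_atTop 1)).exists
  refine ⟨K.toNNReal, fun i => ?_⟩
  set s := {x | K.toNNReal ≤ ‖f i x‖₊}
  have hpt : ∀ x, ‖s.indicator (f i) x‖ ≤ ‖f i x‖ ^ p * K ^ (1 - p) := by
    intro x
    by_cases hx : x ∈ s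
    · rw [indicator_of_mem hx]
      exact self_le_rpow_mul_rpow_one_sub (by linarith)
        (Real.toNNReal_le_iff_le_coe.1 hx) hp.le
    · rw [indicator_of_notMem hx, norm_zero]
      positivity
  have hdom : Integrable (fun x => ‖f i x‖ ^ p * K ^ (1 - p)) μ := (hint i).mul_const _
  calc eLpNorm (s.indicator (f i)) 1 μ = ∫⁻ x, ‖s.indicator (f i) x‖ₑ ∂μ :=
        eLpNorm_one_eq_lintegral_enorm
    _ ≤ ∫⁻ x, ENNReal.ofReal (‖f i x‖ ^ p * K ^ (1 - p)) ∂μ := lintegral_mono fun x => by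
        rw [← ofReal_norm]; exact ENNReal.ofReal_le_ofReal (hpt x)
    _ = ENNReal.ofReal (∫ x, ‖f i x‖ ^ p * K ^ (1 - p) ∂μ) :=
        (ofReal_integral_eq_lintegral_ofReal hdom (ae_of_all _ fun x => by positivity)).symm
    _ ≤ ENNReal.ofReal ε := by
        refine ENNReal.ofReal_le_ofReal ?_
        rw [integral_mul_const]
        exact (mul_le_mul_of_nonneg_right (hC i) (by positivity)).trans hKε

/-- If ρₙ ≥ 0 are bounded in L^{γ+1}, converge weakly in L¹ to ρ, and the weak limit of
ρₙ log ρₙ equals ρ log ρ a.e., then ρₙ → ρ strongly in L¹. -/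
theorem stmt_13 {α : Type*} [MeasurableSpace α] (μ : Measure α) [IsFiniteMeasure μ]
    (γ : ℝ) (hγ : 0 < γ)
    (ρn : ℕ → α → ℝ) (ρ : α → ℝ)
    (hpos : ∀ n x, 0 ≤ ρn n x)
    (hmeas : ∀ n, Measurable (ρn n)) (hρmeas : Measurable ρ)
    (hint : ∀ n, Integrable (fun x => ρn n x ^ (γ + 1)) μ)
    (hbdd : ∃ C : ℝ, ∀ n, ∫ x, ρn n x ^ (γ + 1) ∂μ ≤ C)
    (hρint : Integrable ρ μ)
    (hw : ∀ φ : α → ℝ, Measurable φ → (∃ C, ∀ x, |φ x| ≤ C) →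
      Tendsto (fun n => ∫ x, ρn n x * φ x ∂μ) atTop (𝓝 (∫ x, ρ x * φ x ∂μ)))
    (hwlog : ∀ φ : α → ℝ, Measurable φ → (∃ C, ∀ x, |φ x| ≤ C) →
      Tendsto (fun n => ∫ x, ρn n x * Real.log (ρn n x) * φ x ∂μ) atTop
        (𝓝 (∫ x, ρ x * Real.log (ρ x) * φ x ∂μ))) :
    Tendsto (fun n => ∫ x, |ρn n x - ρ x| ∂μ) atTop (𝓝 0) := by
  obtain ⟨C, hC⟩ := hbdd
  have hρn_int n : Integrable (ρn n) μ :=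
    ((integrable_const 1).add (hint n)).mono' (hmeas n).aestronglyMeasurable
      (ae_of_all _ fun x => by
        simpa [abs_of_nonneg (hpos n x)] using le_one_add_rpow (hpos n x) (by linarith))
  have hρnlog_int n : Integrable (fun x => ρn n x * log (ρn n x)) μ :=
    ((integrable_const 1).add ((hint n).div_const γ)).mono'
      ((hmeas n).mul (hmeas n).log).aestronglyMeasurable
      (ae_of_all _ fun x => abs_mul_log_le (hpos n x) hγ)
  have hnorm n : (fun x => ‖ρn n x‖ ^ (γ + 1)) = fun x => ρn n x ^ (γ + 1) :=
    funext fun x => by rw [Real.norm_of_nonneg (hpos n x)]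
  have hui : UnifIntegrable ρn 1 μ :=
    unifIntegrable_one_of_integral_norm_rpow_le (fun n => (hmeas n).aestronglyMeasurable)
      (by linarith : 1 < γ + 1) (fun n => hnorm n ▸ hint n) (fun n => hnorm n ▸ hC n)
  have hmeasure : TendstoInMeasure μ ρn atTop ρ :=
    TendstoWeakly.tendstoInMeasure hw hwlog hpos hρn_int hρnlog_int hρmeas hρint
  have hL1 := tendsto_Lp_finite_of_tendstoInMeasure le_rfl ENNReal.one_ne_top
    (fun n => (hmeas n).aestronglyMeasurable) (memLp_one_iff_integrable.2 hρint) hui hmeasure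
  refine ((ENNReal.tendsto_toReal ENNReal.zero_ne_top).comp hL1).congr fun n => ?_
  rw [Function.comp_apply, eLpNorm_one_eq_lintegral_enorm,
    ← integral_norm_eq_lintegral_enorm ((hmeas n).sub hρmeas).aestronglyMeasurable]
  simp only [Pi.sub_apply, Real.norm_eq_abs]
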